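/- Fix an integer n ≥ 1, a real constant Λ, a real K > 0, and η ∈ (−∞, ∞]. Let (a, b, c) be an unstable trajectory of (0, K, K) on (−∞, η). Then a(u) < b(u) for every u < η. -/

import Mathlib

open Filter Set

/-- A solution (a, b, c) of the reduced Kähler–Einstein system on the interval
(−∞, η) (η ∈ (−∞, ∞] encoded as an `EReal`), positive there, and converging to the
critical point (0, K, K) as u → −∞: an unstable trajectory of (0, K, K). -/
def IsUnstableTrajectory (n : ℕ) (Λ K : ℝ) (η : EReal) (a b c : ℝ → ℝ) : Prop :=
  (∀ u : ℝ, (u : EReal) < η →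
    HasDerivAt a ((1/2) * a u * (b u ^ 2 + c u ^ 2 - a u ^ 2)) u ∧
    HasDerivAt b ((1/2) * b u * (c u ^ 2 + a u ^ 2 - b u ^ 2)) u ∧
    HasDerivAt c ((1/2) * (n : ℝ) * c u *
      (a u ^ 2 + b u ^ 2 - c u ^ 2 - (2 * Λ / (n : ℝ)) * a u ^ 2 * b u ^ 2)) u ∧
    0 < a u ∧ 0 < b u ∧ 0 < c u) ∧
  Tendsto a atBot (nhds 0) ∧ Tendsto b atBot (nhds K) ∧ Tendsto c atBot (nhds K)

/-- The filter of approach to η ∈ (−∞, ∞] from the left within ℝ: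
it is 𝓝[<] η when η is real, and `atTop` when η = ∞. -/
noncomputable def nhdsLeft (η : EReal) : Filter ℝ :=
  Filter.comap (fun u : ℝ => (u : EReal)) (nhdsWithin η (Set.Iio η))

/- STATEMENT 6: on an unstable trajectory of (0, K, K) with K > 0, one has a < b
everywhere on (−∞, η). -/

theorem a_lt_b_on_unstable_trajectory
    (n : ℕ) (hn : 1 ≤ n) (Λ K : ℝ) (hK : 0 < K) (η : EReal) (hη : η ≠ ⊥)
    (a b c : ℝ → ℝ) (h : IsUnstableTrajectory n Λ K η a b c) :
    ∀ u : ℝ, (u : EReal) < η → a u < b u := by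
  obtain ⟨hsys, hta, htb, htc⟩ := h
  set S : Set ℝ := {u : ℝ | (u : EReal) < η} with hS
  have hSopen : IsOpen S := isOpen_Iio.preimage continuous_coe_real_ereal
  set f : ℝ → ℝ := fun u => b u - a u with hf
  set g : ℝ → ℝ := fun u => (1/2) * (c u ^ 2 - (a u + b u) ^ 2) with hg
  -- f satisfies the linear ODE f' = g f on S
  have hfderiv : ∀ u ∈ S, HasDerivAt f (g u * f u) u := by
    intro u hu
    obtain ⟨hda, hdb, _, _⟩ := hsys u hu
    have := hdb.sub hda
    refine this.congr_deriv ?_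
    simp only [hf, hg]; ring
  -- g is continuous at each point of S
  have hgcont : ∀ u ∈ S, ContinuousAt g u := by
    intro u hu
    obtain ⟨hda, hdb, hdc, _⟩ := hsys u hu
    exact ((hdc.continuousAt.pow 2).sub
      ((hda.continuousAt.add hdb.continuousAt).pow 2)).const_mul _
  -- suppose for contradiction f u₀ ≤ 0 for some u₀ ∈ S
  intro u₀ hu₀
  by_contra hcon
  push_neg at hcon
  have hfu₀ : f u₀ ≤ 0 := by simpa [hf] using hcon
  -- f tends to K at -∞, so f > 0 far to the left
  have htf : Tendsto f atBot (nhds K) := by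
    have := htb.sub hta
    simpa using this
  have hev : ∀ᶠ u in atBot, K / 2 < f u :=
    htf.eventually (eventually_gt_nhds (by linarith))
  obtain ⟨N, hN⟩ := eventually_atBot.mp hev
  set u₁ : ℝ := min N (u₀ - 1) with hu₁def
  have hu₁lt : u₁ < u₀ := lt_of_le_of_lt (min_le_right _ _) (by linarith)
  have hfu₁ : 0 < f u₁ := lt_trans (by linarith) (hN u₁ (min_le_left _ _))
  -- an open interval I with [u₁, u₀] ⊆ I ⊆ S
  obtain ⟨ε, hε, hball⟩ := Metric.isOpen_iff.mp hSopen u₀ hu₀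
  set I : Set ℝ := Ioo (u₁ - 1) (u₀ + ε / 2) with hI
  have hIS : I ⊆ S := by
    intro u hu
    obtain ⟨h1, h2⟩ := hu
    rcases le_or_gt u u₀ with hle | hlt
    · exact lt_of_le_of_lt (EReal.coe_le_coe_iff.mpr hle) hu₀
    · apply hball
      rw [Metric.mem_ball, Real.dist_eq, abs_lt]
      constructor <;> linarith
  have hu₁I : u₁ ∈ I := ⟨by linarith, by linarith⟩
  have hu₀I : u₀ ∈ I := ⟨by linarith, by linarith⟩
  have hIccI : Icc u₁ u₀ ⊆ I := fun u hu => ⟨by linarith [hu.1], by linarith [hu.2]⟩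
  -- primitive of g
  set G : ℝ → ℝ := fun u => ∫ t in u₁..u, g t with hG
  have hgcontOn : ContinuousOn g I := fun u hu => (hgcont u (hIS hu)).continuousWithinAt
  have hGderiv : ∀ u ∈ I, HasDerivAt G (g u) u := by
    intro u hu
    obtain ⟨hu1, hu2⟩ := hu
    apply intervalIntegral.integral_hasDerivAt_right
    · apply ContinuousOn.intervalIntegrable
      apply hgcontOn.mono
      intro t ht
      obtain ⟨ht1, ht2⟩ := ht
      simp only [hI, mem_Ioo]
      have hmin : u₁ - 1 < min u₁ u := lt_min (by linarith) (by linarith)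
      have hmax : max u₁ u < u₀ + ε / 2 := max_lt (by linarith [hu₁I.2]) (by linarith)
      exact ⟨lt_of_lt_of_le hmin ht1, lt_of_le_of_lt ht2 hmax⟩
    · exact ContinuousOn.stronglyMeasurableAtFilter hSopen
        (fun v hv => (hgcont v hv).continuousWithinAt) u (hIS ⟨hu1, hu2⟩)
    · exact hgcont u (hIS ⟨hu1, hu2⟩)
  -- the function f * exp (-G) has zero derivative on I
  set F : ℝ → ℝ := fun u => f u * Real.exp (-G u) with hF
  have hFderiv : ∀ u ∈ I, HasDerivAt F 0 u := by
    intro u hu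
    have h1 : HasDerivAt f (g u * f u) u := hfderiv u (hIS hu)
    have h2 : HasDerivAt (fun v => Real.exp (-G v)) (Real.exp (-G u) * -g u) u :=
      ((hGderiv u hu).neg).exp
    have := h1.mul h2
    refine this.congr_deriv ?_
    ring
  -- F is constant on [u₁, u₀]
  have hFcont : ContinuousOn F (Icc u₁ u₀) := fun u hu =>
    (hFderiv u (hIccI hu)).continuousAt.continuousWithinAt
  have hconst : ∀ u ∈ Icc u₁ u₀, F u = F u₁ := by
    apply constant_of_has_deriv_right_zero hFcont
    intro u hu
    exact (hFderiv u (hIccI (Ico_subset_Icc_self hu))).hasDerivWithinAt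
  have hFu₀ : F u₀ = F u₁ := hconst u₀ ⟨le_of_lt hu₁lt, le_refl _⟩
  have h1 : 0 < F u₁ := mul_pos hfu₁ (Real.exp_pos _)
  have h2 : F u₀ ≤ 0 := mul_nonpos_of_nonpos_of_nonneg hfu₀ (Real.exp_pos _).le
  linarith
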